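/- Let V be an n × n integer matrix and W either elementary enlargement of V (row-type W = [[V, 0, 0], [a, 0, 0], [0, 1, 0]] or column-type W = [[V, b, 0], [0, 0, 1], [0, 0, 0]]). Then the degree spread of det(W − t·Wᵀ) equals that of det(V − t·Vᵀ): the difference between the largest and smallest exponents of t appearing with nonzero coefficient is the same for both polynomials (when det(V − t·Vᵀ) ≠ 0). -/
import Mathlib


open Matrix

/-- The matrix `V - t·Vᵀ` with entries in `ℤ[t]`, associated to a square integer matrix. -/
noncomputable def alexMat {n : Type*} [Fintype n] (V : Matrix n n ℤ) :
    Matrix n n (Polynomial ℤ) :=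
  V.map Polynomial.C - (Polynomial.X : Polynomial ℤ) • (Vᵀ.map Polynomial.C)

/-- The degree spread of a polynomial: the difference between the largest and smallest
exponents appearing with nonzero coefficient. -/
noncomputable def degSpread (p : Polynomial ℤ) : ℕ :=
  p.natDegree - p.natTrailingDegree

/-- The row-type elementary enlargement `W = [[V, 0, 0], [a, 0, 0], [0, 1, 0]]`. -/
def rowEnlarge {n : ℕ} (V : Matrix (Fin n) (Fin n) ℤ) (a : Fin n → ℤ) :
    Matrix (Fin n ⊕ Fin 2) (Fin n ⊕ Fin 2) ℤ :=
  Matrix.fromBlocks V 0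
    (Matrix.of fun (i : Fin 2) (j : Fin n) => if i = 0 then a j else 0)
    !![0, 0; 1, 0]

/-- The column-type elementary enlargement `W = [[V, b, 0], [0, 0, 1], [0, 0, 0]]`. -/
def colEnlarge {n : ℕ} (V : Matrix (Fin n) (Fin n) ℤ) (b : Fin n → ℤ) :
    Matrix (Fin n ⊕ Fin 2) (Fin n ⊕ Fin 2) ℤ :=
  Matrix.fromBlocks V
    (Matrix.of fun (i : Fin n) (j : Fin 2) => if j = 0 then b i else 0)
    0
    !![0, 1; 0, 0]

open Polynomial in
lemma det_alexMat_rowEnlarge {n : ℕ} (V : Matrix (Fin n) (Fin n) ℤ) (a : Fin n → ℤ) :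
    (alexMat (rowEnlarge V a)).det = Polynomial.X * (alexMat V).det := by
  set A := alexMat V with hA
  set B' : Matrix (Fin n) (Fin 2) (Polynomial ℤ) :=
    Matrix.of fun i j => if j = 0 then -(X * C (a i)) else 0 with hB
  set C' : Matrix (Fin 2) (Fin n) (Polynomial ℤ) :=
    Matrix.of fun i j => if i = 0 then C (a j) else 0 with hC
  set D' : Matrix (Fin 2) (Fin 2) (Polynomial ℤ) := !![0, -X; 1, 0] with hD
  set E : Matrix (Fin n) (Fin 2) (Polynomial ℤ) :=
    Matrix.of fun i j => if j = 1 then X * C (a i) else 0 with hE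
  have h1 : alexMat (rowEnlarge V a) = fromBlocks A B' C' D' := by
    apply Matrix.ext; rintro (i | i) (j | j)
    · simp [alexMat, rowEnlarge, hA]
    · fin_cases j <;> simp [alexMat, rowEnlarge, hB]
    · fin_cases i <;> simp [alexMat, rowEnlarge, hC]
    · fin_cases i <;> fin_cases j <;> simp [alexMat, rowEnlarge, hD]
  have eEC : E * C' = 0 := by
    apply Matrix.ext; intro i j
    simp [Matrix.mul_apply, hE, hC, Fin.sum_univ_two]
  have eED : B' + E * D' = 0 := by
    apply Matrix.ext; intro i j
    fin_cases j <;> simp [Matrix.mul_apply, hE, hB, hD, Fin.sum_univ_two]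
  have key : fromBlocks (1 : Matrix (Fin n) (Fin n) (Polynomial ℤ)) E 0 1 *
      fromBlocks A B' C' D' = fromBlocks A 0 C' D' := by
    rw [Matrix.fromBlocks_multiply]
    rw [Matrix.one_mul, Matrix.one_mul, Matrix.one_mul, Matrix.one_mul,
      Matrix.zero_mul, Matrix.zero_mul, eEC, eED, add_zero, zero_add, zero_add]
  have h2 : (alexMat (rowEnlarge V a)).det = A.det * D'.det := by
    rw [h1, ← Matrix.det_fromBlocks_zero₁₂ A C' D',
      ← key, Matrix.det_mul, Matrix.det_fromBlocks_zero₂₁, Matrix.det_one, Matrix.det_one,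
      one_mul, one_mul]
  rw [h2, hD, Matrix.det_fin_two_of]
  ring

open Polynomial in
lemma det_alexMat_colEnlarge {n : ℕ} (V : Matrix (Fin n) (Fin n) ℤ) (b : Fin n → ℤ) :
    (alexMat (colEnlarge V b)).det = Polynomial.X * (alexMat V).det := by
  set A := alexMat V with hA
  set B' : Matrix (Fin n) (Fin 2) (Polynomial ℤ) :=
    Matrix.of fun i j => if j = 0 then C (b i) else 0 with hB
  set C' : Matrix (Fin 2) (Fin n) (Polynomial ℤ) :=
    Matrix.of fun i j => if i = 0 then -(X * C (b j)) else 0 with hC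
  set D' : Matrix (Fin 2) (Fin 2) (Polynomial ℤ) := !![0, 1; -X, 0] with hD
  set E : Matrix (Fin 2) (Fin n) (Polynomial ℤ) :=
    Matrix.of fun i j => if i = 1 then X * C (b j) else 0 with hE
  have h1 : alexMat (colEnlarge V b) = fromBlocks A B' C' D' := by
    apply Matrix.ext; rintro (i | i) (j | j)
    · simp [alexMat, colEnlarge, hA]
    · fin_cases j <;> simp [alexMat, colEnlarge, hB]
    · fin_cases i <;> simp [alexMat, colEnlarge, hC]
    · fin_cases i <;> fin_cases j <;> simp [alexMat, colEnlarge, hD]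
  have eBE : B' * E = 0 := by
    apply Matrix.ext; intro i j
    simp [Matrix.mul_apply, hE, hB, Fin.sum_univ_two]
  have eDE : C' + D' * E = 0 := by
    apply Matrix.ext; intro i j
    fin_cases i <;> simp [Matrix.mul_apply, hE, hC, hD, Fin.sum_univ_two,
      Matrix.vecHead, Matrix.vecTail]
  have key : fromBlocks A B' C' D' *
      fromBlocks (1 : Matrix (Fin n) (Fin n) (Polynomial ℤ)) 0 E 1 = fromBlocks A B' 0 D' := by
    rw [Matrix.fromBlocks_multiply]
    rw [Matrix.mul_one, Matrix.mul_one, Matrix.mul_one, Matrix.mul_one,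
      Matrix.mul_zero, Matrix.mul_zero, eBE, eDE, add_zero, zero_add, zero_add]
  have h2 : (alexMat (colEnlarge V b)).det = A.det * D'.det := by
    rw [h1, ← Matrix.det_fromBlocks_zero₂₁ A B' D',
      ← key, Matrix.det_mul, Matrix.det_fromBlocks_zero₁₂, Matrix.det_one, Matrix.det_one,
      one_mul, mul_one]
  rw [h2, hD, Matrix.det_fin_two_of]
  ring

lemma degSpread_X_mul (p : Polynomial ℤ) (hp : p ≠ 0) :
    degSpread (Polynomial.X * p) = degSpread p := by
  unfold degSpread
  rw [Polynomial.natDegree_mul Polynomial.X_ne_zero hp,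
    Polynomial.natTrailingDegree_mul Polynomial.X_ne_zero hp,
    Polynomial.natDegree_X, Polynomial.natTrailingDegree_X]
  omega

/-- For either elementary enlargement `W` of `V`, the degree spread of `det(W − t·Wᵀ)`
equals that of `det(V − t·Vᵀ)` (when the latter is nonzero). -/
theorem degSpread_det_alexMat_enlarge {n : ℕ} (V : Matrix (Fin n) (Fin n) ℤ)
    (a b : Fin n → ℤ) (hV : (alexMat V).det ≠ 0) :
    degSpread (alexMat (rowEnlarge V a)).det = degSpread (alexMat V).det ∧
    degSpread (alexMat (colEnlarge V b)).det = degSpread (alexMat V).det := by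
  constructor
  · rw [det_alexMat_rowEnlarge, degSpread_X_mul _ hV]
  · rw [det_alexMat_colEnlarge, degSpread_X_mul _ hV]
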